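/- arXiv:math/0609770 — 2 statements merged into one kernel-verified Lean document; each statement's English description precedes it below -/
import Mathlib

section
/- Let A = ⊕_{λ∈Γ} A^λ be a Γ-graded associative commutative unital ℂ-algebra (so A^λ·A^χ ⊆ A^{λ+χ} and 1 ∈ A^0). Define a new product on A by setting a * b = (−1)^{r(λ,χ)} a·b for homogeneous a ∈ A^λ, b ∈ A^χ (the sign given by any integer lift of r(λ,χ) ∈ ℤ/2ℤ), extended bilinearly. Then (A, *) is an associative unital Γ-graded ℂ-algebra with the same unit, and for all homogeneous a ∈ A^λ, b ∈ A^χ one has a * b = (−1)^{p(λ)p(χ)+B(λ,χ)} b * a; that is, (A, *) is a B-twisted commutative algebra. -/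
/-!
Twisting the product of a `Γ`-graded commutative algebra by `(−1)^{r(λ,χ)}` keeps it associative
and unital because the biadditive `r` is a normalized 2-cocycle, and makes it
`(−1)^{r(λ,χ) + r(χ,λ)}`-commutative. The symmetrization `r(λ,χ) + r(χ,λ)` and
`p(λ)p(χ) + B(λ,χ)` are both biadditive in `λ, χ` (since `p` is additive) and agree on pairs of
basis vectors by the defining property of `r`, so they agree everywhere.
-/

namespace S6

/-- The `i`-th standard basis vector of `Γ = ℤⁿ`. -/
def e (n : ℕ) (i : Fin n) : Fin n → ℤ := Pi.single i 1

/-- The sign `(−1)^t` attached to an element `t ∈ ℤ/2ℤ`. -/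
def sgn (t : ZMod 2) : ℂ := (-1 : ℂ) ^ t.val

open DirectSum

theorem sgn_zero : sgn 0 = 1 := by
  simp [sgn]

theorem sgn_add (s t : ZMod 2) : sgn (s + t) = sgn s * sgn t := by
  rw [sgn, sgn, sgn, ← pow_add, ZMod.val_add, ← neg_one_pow_eq_pow_mod_two]

section Graded

variable {ι A M : Type*}

theorem linearMap_ext_homogeneous [DecidableEq ι] [AddCommMonoid A] [Module ℂ A]
    [AddCommMonoid M] [Module ℂ M] (𝒜 : ι → Submodule ℂ A) [Decomposition 𝒜] {f g : A →ₗ[ℂ] M}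
    (h : ∀ i, ∀ a ∈ 𝒜 i, f a = g a) : f = g := by
  ext x
  induction x using Decomposition.inductionOn 𝒜 with
  | zero => simp
  | homogeneous a => exact h _ a a.2
  | add x y hx hy => simp [hx, hy]

variable [Semiring A] [Algebra ℂ A]

def IsSignTwist (𝒜 : ι → Submodule ℂ A) (ε : ι → ι → ZMod 2) (star : A →ₗ[ℂ] A →ₗ[ℂ] A) :
    Prop :=
  ∀ ⦃i j : ι⦄ ⦃a b : A⦄, a ∈ 𝒜 i → b ∈ 𝒜 j → star a b = sgn (ε i j) • (a * b)

namespace IsSignTwist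

variable {𝒜 : ι → Submodule ℂ A} {ε : ι → ι → ZMod 2} {star : A →ₗ[ℂ] A →ₗ[ℂ] A}
  {i j : ι} {a b : A}

theorem star_comm (h : IsSignTwist 𝒜 ε star) (ha : a ∈ 𝒜 i) (hb : b ∈ 𝒜 j) (hab : Commute a b) :
    star a b = sgn (ε i j + ε j i) • star b a := by
  rw [h ha hb, h hb ha, smul_smul, ← sgn_add, add_assoc, CharTwo.add_self_eq_zero, add_zero,
    hab.eq]

variable [AddMonoid ι]

theorem mem_graded [SetLike.GradedMonoid 𝒜] (h : IsSignTwist 𝒜 ε star) (ha : a ∈ 𝒜 i)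
    (hb : b ∈ 𝒜 j) : star a b ∈ 𝒜 (i + j) := by
  rw [h ha hb]
  exact Submodule.smul_mem _ _ (SetLike.mul_mem_graded ha hb)

variable [DecidableEq ι] [GradedAlgebra 𝒜]

theorem assoc (h : IsSignTwist 𝒜 ε star)
    (hε : ∀ i j k, ε i j + ε (i + j) k = ε j k + ε i (j + k)) (x y z : A) :
    star (star x y) z = star x (star y z) := by
  have homogeneous : ∀ i j k, ∀ a ∈ 𝒜 i, ∀ b ∈ 𝒜 j, ∀ c ∈ 𝒜 k,
      star (star a b) c = star a (star b c) := by
    intro i j k a ha b hb c hc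
    rw [h ha hb, map_smul, LinearMap.smul_apply,
      h (SetLike.mul_mem_graded ha hb) hc, h hb hc, map_smul,
      h ha (SetLike.mul_mem_graded hb hc), smul_smul, smul_smul, ← sgn_add,
      ← sgn_add, hε, mul_assoc]
  refine LinearMap.congr_fun (linearMap_ext_homogeneous 𝒜
    (f := star.flip z ∘ₗ star.flip y) (g := star.flip (star y z)) fun i a ha => ?_) x
  refine LinearMap.congr_fun (linearMap_ext_homogeneous 𝒜
    (f := star.flip z ∘ₗ star a) (g := star a ∘ₗ star.flip z) fun j b hb => ?_) y
  refine LinearMap.congr_fun (linearMap_ext_homogeneous 𝒜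
    (f := star (star a b)) (g := star a ∘ₗ star b) fun k c hc => ?_) z
  exact homogeneous i j k a ha b hb c hc

theorem one_star (h : IsSignTwist 𝒜 ε star) (hε : ∀ i, ε 0 i = 0) (x : A) : star 1 x = x := by
  refine LinearMap.congr_fun (linearMap_ext_homogeneous 𝒜 (g := LinearMap.id) ?_) x
  intro i a ha
  rw [h SetLike.GradedOne.one_mem ha, hε, sgn_zero, one_smul, one_mul, LinearMap.id_apply]

theorem star_one (h : IsSignTwist 𝒜 ε star) (hε : ∀ i, ε i 0 = 0) (x : A) : star x 1 = x := by
  refine LinearMap.congr_fun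
    (linearMap_ext_homogeneous 𝒜 (f := star.flip 1) (g := LinearMap.id) ?_) x
  intro i a ha
  rw [LinearMap.flip_apply, h ha SetLike.GradedOne.one_mem, hε, sgn_zero, one_smul,
    mul_one, LinearMap.id_apply]

end IsSignTwist

end Graded

section Biadditive

variable {G H M : Type*} [AddCommGroup G] [AddCommGroup H] [AddCommGroup M]

def biadditiveHom (f : G → H → M) (hl : ∀ x y z, f (x + y) z = f x z + f y z)
    (hr : ∀ x y z, f x (y + z) = f x y + f x z) : G →+ H →+ M :=
  AddMonoidHom.mk' (fun x => AddMonoidHom.mk' (f x) (hr x)) fun x y => AddMonoidHom.ext (hl x y)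

theorem biadditiveHom_ext_e {n : ℕ} {F F' : (Fin n → ℤ) →+ (Fin n → ℤ) →+ M}
    (h : ∀ i j, F (e n i) (e n j) = F' (e n i) (e n j)) : F = F' := by
  ext i j
  exact h i j

theorem parity_add {B : G → G → ℤ} (hB_add_left : ∀ x y z, B (x + y) z = B x z + B y z)
    (hB_add_right : ∀ x y z, B x (y + z) = B x y + B x z) (hB_symm : ∀ x y, B x y = B y x)
    (x y : G) : (B (x + y) (x + y) : ZMod 2) = B x x + B y y := by
  have expand : B (x + y) (x + y) = B x x + B y y + 2 * B x y := by
    rw [hB_add_left, hB_add_right, hB_add_right, hB_symm y x]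
    ring
  rw [expand]
  push_cast
  rw [show (2 : ZMod 2) = 0 from rfl]
  ring

end Biadditive

section Basis

variable {n : ℕ} {B : (Fin n → ℤ) → (Fin n → ℤ) → ℤ} {r : (Fin n → ℤ) → (Fin n → ℤ) → ZMod 2}

theorem r_add_r_swap_e (hB_symm : ∀ x y, B x y = B y x)
    (hr_basis_gt : ∀ i j : Fin n, j < i →
      r (e n i) (e n j) =
        (B (e n i) (e n i) : ZMod 2) * (B (e n j) (e n j) : ZMod 2) +
          (B (e n i) (e n j) : ZMod 2))
    (hr_basis_le : ∀ i j : Fin n, i ≤ j → r (e n i) (e n j) = 0) (i j : Fin n) :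
    r (e n i) (e n j) + r (e n j) (e n i) =
      (B (e n i) (e n i) : ZMod 2) * (B (e n j) (e n j) : ZMod 2) +
        (B (e n i) (e n j) : ZMod 2) := by
  rcases lt_trichotomy i j with hij | rfl | hji
  · rw [hr_basis_le i j hij.le, hr_basis_gt j i hij, zero_add, hB_symm (e n j) (e n i), mul_comm]
  · rw [hr_basis_le i i le_rfl, add_zero]
    have idempotent : ∀ t : ZMod 2, 0 = t * t + t := by decide
    exact idempotent _
  · rw [hr_basis_gt i j hji, hr_basis_le j i hji.le, add_zero]

theorem r_add_r_swap (hB_add_left : ∀ x y z, B (x + y) z = B x z + B y z)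
    (hB_add_right : ∀ x y z, B x (y + z) = B x y + B x z) (hB_symm : ∀ x y, B x y = B y x)
    (hr_add_left : ∀ x y z, r (x + y) z = r x z + r y z)
    (hr_add_right : ∀ x y z, r x (y + z) = r x y + r x z)
    (hr_basis_gt : ∀ i j : Fin n, j < i →
      r (e n i) (e n j) =
        (B (e n i) (e n i) : ZMod 2) * (B (e n j) (e n j) : ZMod 2) +
          (B (e n i) (e n j) : ZMod 2))
    (hr_basis_le : ∀ i j : Fin n, i ≤ j → r (e n i) (e n j) = 0) (x y : Fin n → ℤ) :
    r x y + r y x = (B x x : ZMod 2) * (B y y : ZMod 2) + (B x y : ZMod 2) := by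
  have hp := parity_add hB_add_left hB_add_right hB_symm
  let rSymm := biadditiveHom (fun x y => r x y + r y x)
    (fun x y z => by rw [hr_add_left, hr_add_right]; abel)
    (fun x y z => by rw [hr_add_left, hr_add_right]; abel)
  let q := biadditiveHom (fun x y => (B x x : ZMod 2) * (B y y : ZMod 2) + (B x y : ZMod 2))
    (fun x y z => by rw [hp, hB_add_left]; push_cast; ring)
    (fun x y z => by rw [hp, hB_add_right]; push_cast; ring)
  have : rSymm = q := biadditiveHom_ext_e (r_add_r_swap_e hB_symm hr_basis_gt hr_basis_le)
  exact DFunLike.congr_fun (DFunLike.congr_fun this x) y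

end Basis

/-- **The sign-twist of a graded commutative algebra is twisted commutative**
(Statement 6).  Let `Γ = ℤⁿ`, `B` a symmetric biadditive form on `Γ`,
`p(λ) = B(λ,λ) mod 2`, and `r` the biadditive map with `r(eᵢ,eⱼ) = p(eᵢ)p(eⱼ) + B(eᵢ,eⱼ)`
for `i > j` and `0` for `i ≤ j`.  Let `A = ⊕_{λ∈Γ} A^λ` be a `Γ`-graded associative
commutative unital `ℂ`-algebra and let `*` be the bilinear product with
`a * b = (−1)^{r(λ,χ)} a·b` for homogeneous `a ∈ A^λ`, `b ∈ A^χ`.  Then `(A, *)` is an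
associative unital `Γ`-graded `ℂ`-algebra with the same unit, and
`a * b = (−1)^{p(λ)p(χ)+B(λ,χ)} b * a` for homogeneous `a, b`. -/
theorem twisted_commutative_of_sign_modified_product (n : ℕ)
    (B : (Fin n → ℤ) → (Fin n → ℤ) → ℤ)
    (hB_add_left : ∀ x y z, B (x + y) z = B x z + B y z)
    (hB_add_right : ∀ x y z, B x (y + z) = B x y + B x z)
    (hB_symm : ∀ x y, B x y = B y x)
    (r : (Fin n → ℤ) → (Fin n → ℤ) → ZMod 2)
    (hr_add_left : ∀ x y z, r (x + y) z = r x z + r y z)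
    (hr_add_right : ∀ x y z, r x (y + z) = r x y + r x z)
    (hr_basis_gt : ∀ i j : Fin n, j < i →
      r (e n i) (e n j) =
        (B (e n i) (e n i) : ZMod 2) * (B (e n j) (e n j) : ZMod 2) +
          (B (e n i) (e n j) : ZMod 2))
    (hr_basis_le : ∀ i j : Fin n, i ≤ j → r (e n i) (e n j) = 0)
    (A : Type) [CommRing A] [Algebra ℂ A]
    (𝒜 : (Fin n → ℤ) → Submodule ℂ A) [GradedAlgebra 𝒜]
    (star : A →ₗ[ℂ] A →ₗ[ℂ] A)
    (hstar : ∀ (lam chi : Fin n → ℤ) (a b : A), a ∈ 𝒜 lam → b ∈ 𝒜 chi →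
      star a b = sgn (r lam chi) • (a * b)) :
    (∀ x y z : A, star (star x y) z = star x (star y z)) ∧
    (∀ x : A, star 1 x = x ∧ star x 1 = x) ∧
    (∀ (lam chi : Fin n → ℤ) (a b : A), a ∈ 𝒜 lam → b ∈ 𝒜 chi →
      star a b ∈ 𝒜 (lam + chi)) ∧
    (∀ (lam chi : Fin n → ℤ) (a b : A), a ∈ 𝒜 lam → b ∈ 𝒜 chi →
      star a b =
        sgn ((B lam lam : ZMod 2) * (B chi chi : ZMod 2) + (B lam chi : ZMod 2)) •
          (star b a)) := by
  have h : IsSignTwist 𝒜 r star := hstar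
  have r_cocycle : ∀ i j k, r i j + r (i + j) k = r j k + r i (j + k) := fun i j k => by
    rw [hr_add_left, hr_add_right]
    abel
  refine ⟨h.assoc r_cocycle, fun x => ⟨h.one_star (fun i => ?_) x, h.star_one (fun i => ?_) x⟩,
    fun _ _ _ _ => h.mem_graded, fun lam chi a b ha hb => ?_⟩
  · simpa using hr_add_left 0 0 i
  · simpa using hr_add_right i 0 0
  · rw [h.star_comm ha hb (Commute.all a b),
      r_add_r_swap hB_add_left hB_add_right hB_symm hr_add_left hr_add_right hr_basis_gt
        hr_basis_le]

end S6
end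

section
/- Let χ ∈ E and let k be a nonzero real number. For w ∈ W and μ ∈ E write w·μ = w(μ+ρ) − ρ for the dot action. Assume that for every w ∈ W with w ≠ 1 there exists a root α ∈ Φ such that (χ − ρ − w(χ−ρ), α^∨)/k ∉ ℤ. Then the level-k affine dot action on −χ is free: the map Γ × W → E sending (λ, w) to w·(−χ) − kλ is injective, i.e. if w·(−χ) − kλ = w'·(−χ) − kλ' for (λ,w), (λ',w') ∈ Γ × W, then λ = λ' and w = w'. -/
open RealInnerProductSpace

noncomputable section

namespace S8

variable {E : Type} [NormedAddCommGroup E] [InnerProductSpace ℝ E] [FiniteDimensional ℝ E]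

/-- A reduced irreducible crystallographic root system spanning a finite-dimensional real
inner product space `E`, together with a fixed system of positive roots and the highest
root `θ`, normalized so that `⟪θ, θ⟫ = 2`. -/
structure RootSystemData (E : Type) [NormedAddCommGroup E] [InnerProductSpace ℝ E]
    [FiniteDimensional ℝ E] where
  /-- The finite set of roots. -/
  Φ : Finset E
  zero_not_mem : (0 : E) ∉ Φ
  span_eq_top : Submodule.span ℝ (Φ : Set E) = ⊤
  neg_mem : ∀ α ∈ Φ, -α ∈ Φ
  /-- The root system is reduced. -/
  reduced : ∀ α ∈ Φ, ∀ c : ℝ, c • α ∈ Φ → c = 1 ∨ c = -1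
  /-- The reflection in a root maps roots to roots. -/
  reflection_mem : ∀ α ∈ Φ, ∀ β ∈ Φ, β - (2 * ⟪α, β⟫ / ⟪α, α⟫) • α ∈ Φ
  /-- The root system is crystallographic: `⟪α^∨, β⟫ ∈ ℤ`. -/
  crystallographic : ∀ α ∈ Φ, ∀ β ∈ Φ, ∃ n : ℤ, 2 * ⟪α, β⟫ / ⟪α, α⟫ = (n : ℝ)
  /-- The root system is irreducible. -/
  irreducible : ∀ S : Finset E, S ⊆ Φ →
    (∀ α ∈ S, ∀ β ∈ Φ, β ∉ S → ⟪α, β⟫ = 0) → S = ∅ ∨ S = Φ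
  /-- The fixed system of positive roots. -/
  pos : Finset E
  pos_subset : pos ⊆ Φ
  /-- The positive roots are cut out by a linear functional not vanishing on any root. -/
  exists_functional : ∃ f : E →ₗ[ℝ] ℝ,
    (∀ α ∈ Φ, f α ≠ 0) ∧ ∀ α ∈ Φ, (α ∈ pos ↔ 0 < f α)
  /-- The highest root. -/
  θ : E
  θ_mem_pos : θ ∈ pos
  /-- `θ` is the highest root: no positive root can be added to it. -/
  θ_highest : ∀ α ∈ pos, θ + α ∉ Φ
  /-- Normalization of the inner product: `⟪θ, θ⟫ = 2`. -/
  θ_norm : ⟪θ, θ⟫ = 2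

/-- The half-sum of the positive roots. -/
def RootSystemData.ρ (S : RootSystemData E) : E := (2⁻¹ : ℝ) • ∑ α ∈ S.pos, α

/-- The dual Coxeter number `h^∨ = 1 + ⟪ρ, θ⟫`. -/
def RootSystemData.hdual (S : RootSystemData E) : ℝ := 1 + ⟪S.ρ, S.θ⟫

/-- The Weyl group: the subgroup of `GL(E)` generated by the reflections in the roots. -/
def RootSystemData.W (S : RootSystemData E) : Subgroup (E ≃ₗ[ℝ] E) :=
  Subgroup.closure {w | ∃ α ∈ S.Φ, ∀ x : E, w x = x - (2 * ⟪α, x⟫ / ⟪α, α⟫) • α}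

/-- The coweight lattice `Γ = {λ ∈ E : ⟪α, λ⟫ ∈ ℤ for all α ∈ Φ}` (identified with a
lattice in `E` via the inner product). -/
def RootSystemData.coweights (S : RootSystemData E) : Set E :=
  {l | ∀ α ∈ S.Φ, ∃ n : ℤ, ⟪α, l⟫ = (n : ℝ)}

-- auxiliary lemmas

lemma root_ne_zero (S : RootSystemData E) {α : E} (hα : α ∈ S.Φ) : α ≠ 0 :=
  fun h => S.zero_not_mem (h ▸ hα)

lemma root_inner_self_pos (S : RootSystemData E) {α : E} (hα : α ∈ S.Φ) : 0 < ⟪α, α⟫ :=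
  lt_of_le_of_ne real_inner_self_nonneg
    (Ne.symm fun h => root_ne_zero S hα ((inner_self_eq_zero (𝕜 := ℝ)).mp h))

lemma θ_mem (S : RootSystemData E) : S.θ ∈ S.Φ := S.pos_subset S.θ_mem_pos

lemma refl_inner {γ : E} (hγ : ⟪γ, γ⟫ ≠ 0) (x y : E) :
    ⟪x - (2 * ⟪γ, x⟫ / ⟪γ, γ⟫) • γ, y - (2 * ⟪γ, y⟫ / ⟪γ, γ⟫) • γ⟫ = ⟪x, y⟫ := by
  simp only [inner_sub_left, inner_sub_right, real_inner_smul_left, real_inner_smul_right,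
    real_inner_comm γ x, real_inner_comm γ y]
  field_simp
  ring

lemma weyl_props (S : RootSystemData E) : ∀ w ∈ S.W,
    (∀ x y : E, ⟪w x, w y⟫ = ⟪x, y⟫) ∧ (∀ α ∈ S.Φ, w α ∈ S.Φ) := by
  classical
  intro w hw
  induction hw using Subgroup.closure_induction with
  | mem w hw =>
    obtain ⟨α, hα, hwα⟩ := hw
    refine ⟨fun x y => ?_, fun β hβ => ?_⟩
    · rw [hwα x, hwα y]
      exact refl_inner (ne_of_gt (root_inner_self_pos S hα)) x y
    · rw [hwα β]; exact S.reflection_mem α hα β hβ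
  | one => simp
  | mul u v hu hv hu' hv' =>
    refine ⟨fun x y => ?_, fun α hα => ?_⟩
    · have : (u * v) x = u (v x) := rfl
      rw [this, (show (u * v) y = u (v y) from rfl), hu'.1, hv'.1]
    · have : (u * v) α = u (v α) := rfl
      rw [this]; exact hu'.2 _ (hv'.2 α hα)
  | inv u hu hu' =>
    have hinv : ∀ α ∈ S.Φ, u⁻¹ α ∈ S.Φ := by
      have himg : S.Φ.image (fun x => u x) = S.Φ := by
        apply Finset.eq_of_subset_of_card_le
        · intro x hx
          obtain ⟨a, ha, rfl⟩ := Finset.mem_image.mp hx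
          exact hu'.2 a ha
        · rw [Finset.card_image_of_injective _ u.injective]
      intro α hα
      rw [← himg] at hα
      obtain ⟨a, ha, rfl⟩ := Finset.mem_image.mp hα
      have : u⁻¹ (u a) = a := u.symm_apply_apply a
      rw [this]; exact ha
    refine ⟨fun x y => ?_, hinv⟩
    have h1 := hu'.1 (u⁻¹ x) (u⁻¹ y)
    have hx : u (u⁻¹ x) = x := u.apply_symm_apply x
    have hy : u (u⁻¹ y) = y := u.apply_symm_apply y
    rw [hx, hy] at h1
    exact h1.symm

/-- `C S n β` : `β` is a root connected to a root non-orthogonal to `θ` by a chain of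
length at most `n` of consecutively non-orthogonal roots. -/
def C (S : RootSystemData E) : ℕ → E → Prop
  | 0, β => β ∈ S.Φ ∧ ⟪S.θ, β⟫ ≠ 0
  | n + 1, β => β ∈ S.Φ ∧ (C S n β ∨ ∃ γ, C S n γ ∧ ⟪γ, β⟫ ≠ 0)

lemma C_mem {S : RootSystemData E} : ∀ {n β}, C S n β → β ∈ S.Φ
  | 0, _, h => h.1
  | _ + 1, _, h => h.1

lemma connected (S : RootSystemData E) : ∀ β ∈ S.Φ, ∃ n, C S n β := by
  classical
  have key : ∀ β ∈ S.Φ,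
      Relation.ReflTransGen (fun x y => y ∈ S.Φ ∧ ⟪x, y⟫ ≠ 0) S.θ β := by
    set T : Finset E :=
      S.Φ.filter (fun β => Relation.ReflTransGen (fun x y => y ∈ S.Φ ∧ ⟪x, y⟫ ≠ 0) S.θ β)
      with hT
    have hTsub : T ⊆ S.Φ := Finset.filter_subset _ _
    have horth : ∀ α ∈ T, ∀ β ∈ S.Φ, β ∉ T → ⟪α, β⟫ = 0 := by
      intro α hα β hβ hβT
      by_contra hne
      have hαT := Finset.mem_filter.mp hα
      exact hβT (Finset.mem_filter.mpr ⟨hβ, hαT.2.tail ⟨hβ, hne⟩⟩)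
    rcases S.irreducible T hTsub horth with he | hful
    · exfalso
      have : S.θ ∈ T := Finset.mem_filter.mpr ⟨θ_mem S, Relation.ReflTransGen.refl⟩
      rw [he] at this; exact absurd this (Finset.notMem_empty _)
    · intro β hβ
      rw [← hful] at hβ
      exact (Finset.mem_filter.mp hβ).2
  intro β hβ
  have hr := key β hβ
  clear key hβ
  induction hr with
  | refl => exact ⟨0, θ_mem S, by rw [S.θ_norm]; norm_num⟩
  | tail _ hbc ih =>
    obtain ⟨n, hn⟩ := ih
    exact ⟨n + 1, hbc.1, Or.inr ⟨_, hn, hbc.2⟩⟩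

lemma same_norm_non_orth (S : RootSystemData E) :
    ∀ n β, C S n β → ∃ β', β' ∈ S.Φ ∧ ⟪β', β'⟫ = ⟪β, β⟫ ∧ ⟪S.θ, β'⟫ ≠ 0 := by
  intro n
  induction n using Nat.strong_induction_on with
  | _ n ih =>
    match n with
    | 0 => exact fun β h => ⟨β, h.1, rfl, h.2⟩
    | n + 1 =>
      intro β hβ
      obtain ⟨hβΦ, hc⟩ := hβ
      rcases hc with h0 | ⟨γ, hγ, hγβ⟩
      · exact ih n (Nat.lt_succ_self n) β h0
      · have hγΦ : γ ∈ S.Φ := C_mem hγ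
        have hγγ : ⟪γ, γ⟫ ≠ 0 := ne_of_gt (root_inner_self_pos S hγΦ)
        have hcne : 2 * ⟪γ, β⟫ / ⟪γ, γ⟫ ≠ 0 :=
          div_ne_zero (mul_ne_zero two_ne_zero hγβ) hγγ
        match n, hγ with
        | 0, hγ =>
          by_cases hθβ : ⟪S.θ, β⟫ = 0
          · refine ⟨β - (2 * ⟪γ, β⟫ / ⟪γ, γ⟫) • γ, S.reflection_mem γ hγΦ β hβΦ, ?_, ?_⟩
            · exact refl_inner hγγ β β
            · rw [inner_sub_right, real_inner_smul_right, hθβ]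
              simp only [zero_sub, neg_ne_zero]
              exact mul_ne_zero hcne hγ.2
          · exact ⟨β, hβΦ, rfl, hθβ⟩
        | m + 1, hγ =>
          rcases hγ.2 with hmγ | ⟨δ, hδ, hδγ⟩
          · exact ih (m + 1) (Nat.lt_succ_self _) β ⟨hβΦ, Or.inr ⟨γ, hmγ, hγβ⟩⟩
          · by_cases hδβ : ⟪δ, β⟫ = 0
            · set β' := β - (2 * ⟪γ, β⟫ / ⟪γ, γ⟫) • γ with hβ'
              have hβ'Φ : β' ∈ S.Φ := S.reflection_mem γ hγΦ β hβΦ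
              have hδβ' : ⟪δ, β'⟫ ≠ 0 := by
                rw [hβ', inner_sub_right, real_inner_smul_right, hδβ]
                simp only [zero_sub, neg_ne_zero]
                exact mul_ne_zero hcne hδγ
              obtain ⟨β'', h1, h2, h3⟩ :=
                ih (m + 1) (Nat.lt_succ_self _) β' ⟨hβ'Φ, Or.inr ⟨δ, hδ, hδβ'⟩⟩
              exact ⟨β'', h1, by rw [h2, hβ']; exact refl_inner hγγ β β, h3⟩
            · exact ih (m + 1) (Nat.lt_succ_self _) β ⟨hβΦ, Or.inr ⟨δ, hδ, hδβ⟩⟩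

lemma ratio_int_of_nonorth (S : RootSystemData E) {β : E} (hβ : β ∈ S.Φ)
    (hpos : 0 < ⟪S.θ, β⟫) : ∃ m : ℤ, 2 / ⟪β, β⟫ = (m : ℝ) := by
  have hθΦ := θ_mem S
  have ht : (0 : ℝ) < ⟪β, β⟫ := root_inner_self_pos S hβ
  obtain ⟨a, ha⟩ := S.crystallographic S.θ hθΦ β hβ
  rw [S.θ_norm] at ha
  have ha' : ⟪S.θ, β⟫ = (a : ℝ) := by linarith
  obtain ⟨b, hb⟩ := S.crystallographic β hβ S.θ hθΦ
  rw [real_inner_comm S.θ β] at hb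
  have hb' : 2 * ⟪S.θ, β⟫ = (b : ℝ) * ⟪β, β⟫ := by
    field_simp at hb; linarith
  have ha1 : 1 ≤ a := by
    have : (0 : ℝ) < a := ha' ▸ hpos
    exact_mod_cast this
  have hb1 : 1 ≤ b := by
    have h1 : (0 : ℝ) < (b : ℝ) * ⟪β, β⟫ := by rw [← hb']; linarith
    have h2 : (0 : ℝ) < (b : ℝ) := by nlinarith
    exact_mod_cast h2
  have hCS : ⟪S.θ, β⟫ * ⟪S.θ, β⟫ ≤ 2 * ⟪β, β⟫ := by
    have := real_inner_mul_inner_self_le S.θ β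
    rwa [S.θ_norm] at this
  have hab4 : a * b ≤ 4 := by
    have h1 : ((a * b : ℤ) : ℝ) * ⟪β, β⟫ ≤ 4 * ⟪β, β⟫ := by
      push_cast
      nlinarith
    have h2 : ((a * b : ℤ) : ℝ) ≤ 4 := le_of_mul_le_mul_right (by linarith) ht
    exact_mod_cast h2
  by_cases hA : a = 1
  · refine ⟨b, ?_⟩
    rw [div_eq_iff (ne_of_gt ht)]
    rw [ha', hA] at hb'
    push_cast at hb' ⊢
    linarith
  · have ha2 : 2 ≤ a := by omega
    by_cases hB : 2 ≤ b
    · have haa : a = 2 := by nlinarith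
      have hbb : b = 2 := by nlinarith
      refine ⟨1, ?_⟩
      have ht2 : ⟪β, β⟫ = 2 := by
        rw [ha', haa, hbb] at hb'; push_cast at hb'; linarith
      rw [ht2]; norm_num
    · have hb1' : b = 1 := by omega
      exfalso
      have hta : ⟪β, β⟫ = 2 * (a : ℝ) := by
        rw [ha', hb1'] at hb'; push_cast at hb'; linarith
      have ha4 : a ≤ 4 := by rw [hb1', mul_one] at hab4; exact hab4
      by_cases hA4 : a = 4
      · have hzero : ⟪β - (2 : ℝ) • S.θ, β - (2 : ℝ) • S.θ⟫ = 0 := by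
          rw [inner_sub_left, inner_sub_right, inner_sub_right, real_inner_smul_left,
            real_inner_smul_left, real_inner_smul_right, real_inner_smul_right,
            real_inner_comm S.θ β, S.θ_norm, ha', hta, hA4]
          push_cast; ring
        have hβ2θ : β = (2 : ℝ) • S.θ := by
          have h' : β - (2 : ℝ) • S.θ = 0 := (inner_self_eq_zero (𝕜 := ℝ)).mp hzero
          rwa [sub_eq_zero] at h'
        rcases S.reduced S.θ hθΦ 2 (hβ2θ ▸ hβ) with h | h <;> norm_num at h
      · have ha23 : a = 2 ∨ a = 3 := by omega
        have hθmβ : S.θ - β ∈ S.Φ := by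
          have hrefl := S.reflection_mem β hβ S.θ hθΦ
          rw [real_inner_comm S.θ β] at hrefl
          have hco : 2 * ⟪S.θ, β⟫ / ⟪β, β⟫ = (1 : ℝ) := by
            rw [hb, hb1']; norm_num
          rwa [hco, one_smul] at hrefl
        set γ := β - S.θ with hγdef
        have hγΦ : γ ∈ S.Φ := by
          have := S.neg_mem _ hθmβ
          rwa [neg_sub] at this
        have hθγ : ⟪S.θ, γ⟫ = (a : ℝ) - 2 := by
          rw [hγdef, inner_sub_right, S.θ_norm, ha']
        have hsum : S.θ + γ = β := by rw [hγdef]; abel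
        have hdiff : S.θ - γ ∈ S.Φ := by
          rcases ha23 with h2 | h3
          · have hrefl := S.reflection_mem S.θ hθΦ β hβ
            rw [S.θ_norm, ha', h2] at hrefl
            have hco : (2 * ((2:ℤ):ℝ) / 2 : ℝ) = 2 := by norm_num
            rw [hco] at hrefl
            have hneg := S.neg_mem _ hrefl
            have heq : -(β - (2:ℝ) • S.θ) = S.θ - γ := by
              rw [hγdef, two_smul]; abel
            rwa [heq] at hneg
          · have hrefl := S.reflection_mem S.θ hθΦ γ hγΦ
            rw [S.θ_norm, hθγ, h3] at hrefl
            have hco : (2 * (((3:ℤ):ℝ) - 2) / 2 : ℝ) = 1 := by norm_num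
            rw [hco, one_smul] at hrefl
            have hneg := S.neg_mem _ hrefl
            rwa [neg_sub] at hneg
        obtain ⟨f, hf0, hfpos⟩ := S.exists_functional
        rcases lt_or_gt_of_ne (hf0 γ hγΦ) with hneg | hposf
        · have hnγ : -γ ∈ S.Φ := S.neg_mem _ hγΦ
          have hmem : -γ ∈ S.pos := (hfpos _ hnγ).mpr (by rw [map_neg]; linarith)
          have hnot := S.θ_highest _ hmem
          rw [← sub_eq_add_neg] at hnot
          exact hnot hdiff
        · have hmem : γ ∈ S.pos := (hfpos _ hγΦ).mpr hposf
          have hnot := S.θ_highest _ hmem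
          rw [hsum] at hnot
          exact hnot hβ

lemma coroot_ratio_int (S : RootSystemData E) {β : E} (hβ : β ∈ S.Φ) :
    ∃ m : ℤ, 2 / ⟪β, β⟫ = (m : ℝ) := by
  -- reduce to a root of the same length which is non-orthogonal to θ
  obtain ⟨n, hn⟩ := connected S β hβ
  obtain ⟨β', hβ'Φ, hnorm, hθβ'⟩ := same_norm_non_orth S n β hn
  rw [← hnorm]
  rcases lt_or_gt_of_ne hθβ' with hneg | hpos
  · have hnβ' : -β' ∈ S.Φ := S.neg_mem _ hβ'Φ
    have h1 : 0 < ⟪S.θ, -β'⟫ := by rw [inner_neg_right]; linarith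
    obtain ⟨m, hm⟩ := ratio_int_of_nonorth S hnβ' h1
    refine ⟨m, ?_⟩
    rwa [inner_neg_neg] at hm
  · exact ratio_int_of_nonorth S hβ'Φ hpos


/-- **Freeness of the level-`k` affine dot action** (Statement 8).
Let `χ ∈ E` and `k ≠ 0`.  Write `w · μ = w(μ + ρ) − ρ` for the dot action of the Weyl
group.  If for every `w ≠ 1` in the Weyl group there is a root `α` with
`⟪χ − ρ − w(χ − ρ), α^∨⟫ / k ∉ ℤ`, then the map `Γ × W → E`,
`(λ, w) ↦ w · (−χ) − k λ`, is injective. -/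
theorem affine_dot_action_free
    (S : RootSystemData E) (χ : E) (k : ℝ) (hk : k ≠ 0)
    (h : ∀ w : E ≃ₗ[ℝ] E, w ∈ S.W → w ≠ 1 →
      ∃ α ∈ S.Φ, ¬ ∃ n : ℤ, ⟪χ - S.ρ - w (χ - S.ρ), (2 / ⟪α, α⟫) • α⟫ / k = (n : ℝ)) :
    ∀ l ∈ S.coweights, ∀ l' ∈ S.coweights, ∀ w ∈ S.W, ∀ w' ∈ S.W,
      (w (-χ + S.ρ) - S.ρ) - k • l = (w' (-χ + S.ρ) - S.ρ) - k • l' →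
        l = l' ∧ w = w' := by
  intro l hl l' hl' w hw w' hw' heq
  have hξ : (-χ + S.ρ) = -(χ - S.ρ) := by abel
  rw [hξ, map_neg, map_neg] at heq
  have h1 : w' (χ - S.ρ) - w (χ - S.ρ) = k • (l - l') := by
    linear_combination (norm := module) heq
  have hww' : w = w' := by
    by_contra hne
    have hu : (w'⁻¹ * w) ∈ S.W := mul_mem (inv_mem hw') hw
    have hune : w'⁻¹ * w ≠ 1 := fun hone => hne (inv_mul_eq_one.mp hone).symm
    obtain ⟨α, hα, hn⟩ := h _ hu hune
    apply hn
    have hsymm : ((w'⁻¹ : E ≃ₗ[ℝ] E) : E → E) = w'.symm := rfl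
    have h3 : (w'⁻¹ * w) (χ - S.ρ) = w'.symm (w (χ - S.ρ)) := rfl
    have key : χ - S.ρ - (w'⁻¹ * w) (χ - S.ρ) = k • (w'.symm (l - l')) := by
      have h2 := congrArg w'.symm h1
      rw [map_sub, map_smul, w'.symm_apply_apply] at h2
      rw [h3]
      exact h2
    obtain ⟨m, hm⟩ := coroot_ratio_int S ((weyl_props S w' hw').2 α hα)
    obtain ⟨p, hp⟩ := hl (w' α) ((weyl_props S w' hw').2 α hα)
    obtain ⟨q, hq⟩ := hl' (w' α) ((weyl_props S w' hw').2 α hα)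
    refine ⟨m * (p - q), ?_⟩
    rw [key, real_inner_smul_left, mul_comm, mul_div_assoc, div_self hk, mul_one,
      real_inner_smul_right]
    have hinv : ∀ x y : E, ⟪w'.symm x, w'.symm y⟫ = ⟪x, y⟫ := by
      intro x y
      have := (weyl_props S w'⁻¹ (inv_mem hw')).1 x y
      rwa [show ((w'⁻¹ : E ≃ₗ[ℝ] E) : E → E) x = w'.symm x from rfl,
        show ((w'⁻¹ : E ≃ₗ[ℝ] E) : E → E) y = w'.symm y from rfl] at this
    have e1 : ⟪w'.symm (l - l'), α⟫ = ⟪l - l', w' α⟫ := by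
      have := hinv (l - l') (w' α)
      rwa [w'.symm_apply_apply] at this
    have e2 : ⟪α, α⟫ = ⟪w' α, w' α⟫ := by
      have := hinv (w' α) (w' α)
      rwa [w'.symm_apply_apply] at this
    rw [e1, e2, inner_sub_left, real_inner_comm (w' α) l, real_inner_comm (w' α) l',
      hp, hq, hm]
    push_cast
    ring
  refine ⟨?_, hww'⟩
  rw [hww'] at heq
  have h3 : k • l = k • l' := sub_right_injective heq
  exact smul_right_injective E hk h3


end S8
end
end
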